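/- arXiv:2601.22886 — 3 statements merged into one kernel-verified Lean document; each statement's English description precedes it below -/
import Mathlib

section
/- Let m be a positive integer, V an m-dimensional real inner product space with orthonormal basis (e_1, …, e_m), and Cl(Q) the Clifford algebra of the quadratic form Q(x) = −⟪x,x⟫ on V, with structure map ι. Fix 0 ≤ r ≤ m and let Θ be any element of the ℝ-linear span of the degree-r blades ι(e_{i_1})·⋯·ι(e_{i_r}) with i_1 < ⋯ < i_r. Then Σ_{i=1}^m ι(e_i)·Θ·ι(e_i) = (−1)^r (2r − m) • Θ in Cl(Q). -/
open CliffordAlgebra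

section Aux

variable {V : Type*} [NormedAddCommGroup V] [InnerProductSpace ℝ V]
  {m : ℕ} (e : OrthonormalBasis (Fin m) ℝ V) (Q : QuadraticForm ℝ V)

lemma aux_sq (hQ : ∀ x : V, Q x = - (inner ℝ x x : ℝ)) (i : Fin m) :
    ι Q (e i) * ι Q (e i) = algebraMap ℝ _ (-1 : ℝ) := by
  rw [CliffordAlgebra.ι_sq_scalar, hQ]
  congr 1
  have : (inner ℝ (e i) (e i) : ℝ) = 1 := by
    rw [real_inner_self_eq_norm_sq, e.orthonormal.1 i]; norm_num
  rw [this]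

lemma aux_anticomm (hQ : ∀ x : V, Q x = - (inner ℝ x x : ℝ)) (i j : Fin m) (hij : i ≠ j) :
    ι Q (e i) * ι Q (e j) = - (ι Q (e j) * ι Q (e i)) := by
  have h := CliffordAlgebra.ι_mul_ι_add_swap (Q := Q) (e i) (e j)
  have hpolar : QuadraticMap.polar Q (e i) (e j) = 0 := by
    have h0 : (inner ℝ (e i) (e j) : ℝ) = 0 := e.orthonormal.2 hij
    have h0' : (inner ℝ (e j) (e i) : ℝ) = 0 := by rw [real_inner_comm]; exact h0
    simp only [QuadraticMap.polar, hQ, inner_add_add_self, h0, h0']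
    ring
  rw [hpolar, map_zero] at h
  linear_combination (norm := noncomm_ring) h

lemma aux_comm (hQ : ∀ x : V, Q x = - (inner ℝ x x : ℝ))
    (l : List (Fin m)) (i : Fin m) (hi : i ∉ l) :
    ι Q (e i) * (l.map fun j => ι Q (e j)).prod
      = ((-1 : ℝ) ^ l.length) • ((l.map fun j => ι Q (e j)).prod * ι Q (e i)) := by
  induction l with
  | nil => simp
  | cons j t ih =>
    have hij : i ≠ j := fun h => hi (h ▸ List.mem_cons_self (a := j) (l := t))
    have hit : i ∉ t := fun h => hi (List.mem_cons_of_mem j h)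
    simp only [List.map_cons, List.prod_cons, List.length_cons]
    rw [← mul_assoc, aux_anticomm e Q hQ i j hij, neg_mul, mul_assoc, ih hit,
      mul_smul_comm, ← neg_smul, pow_succ, mul_neg_one, ← mul_assoc]

lemma aux_mem (hQ : ∀ x : V, Q x = - (inner ℝ x x : ℝ))
    (l : List (Fin m)) (hl : l.Nodup) (i : Fin m) (hi : i ∈ l) :
    ι Q (e i) * (l.map fun j => ι Q (e j)).prod * ι Q (e i)
      = ((-1 : ℝ) ^ l.length) • (l.map fun j => ι Q (e j)).prod := by
  induction l with
  | nil => simp at hi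
  | cons j t ih =>
    have hjt : j ∉ t := (List.nodup_cons.mp hl).1
    have hlt : t.Nodup := (List.nodup_cons.mp hl).2
    simp only [List.map_cons, List.prod_cons, List.length_cons]
    rcases eq_or_ne i j with rfl | hij
    · -- i = j
      have h2 : (t.map fun j => ι Q (e j)).prod * ι Q (e i)
          = ((-1:ℝ)^t.length) • (ι Q (e i) * (t.map fun j => ι Q (e j)).prod) := by
        rw [aux_comm e Q hQ t i hjt, smul_smul, ← mul_pow]
        norm_num
      rw [← mul_assoc, aux_sq e Q hQ i, Algebra.algebraMap_eq_smul_one,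
        smul_mul_assoc, one_mul, smul_mul_assoc, h2, smul_smul, pow_succ, mul_comm]
    · have hit : i ∈ t := (List.mem_cons.mp hi).resolve_left hij
      have key : ι Q (e i) * (ι Q (e j) * (t.map fun j => ι Q (e j)).prod) * ι Q (e i)
          = -(ι Q (e j) * (ι Q (e i) * (t.map fun j => ι Q (e j)).prod * ι Q (e i))) := by
        rw [← mul_assoc, aux_anticomm e Q hQ i j hij]
        noncomm_ring
      rw [key, ih hlt hit, mul_smul_comm, ← neg_smul, pow_succ, mul_neg_one]

end Aux

/-- Lemma (Clifford conjugation of r-forms): for Θ in the span of the degree-r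
blades of an orthonormal basis, `∑ i, ι(e i) * Θ * ι(e i) = (-1)^r (2r - m) • Θ`. -/
theorem clifford_conjugation_sum
    {V : Type*} [NormedAddCommGroup V] [InnerProductSpace ℝ V]
    (m : ℕ) (hm : 0 < m)
    (e : OrthonormalBasis (Fin m) ℝ V)
    (Q : QuadraticForm ℝ V)
    (hQ : ∀ x : V, Q x = - (inner ℝ x x : ℝ))
    (r : ℕ) (hr : r ≤ m)
    (Θ : CliffordAlgebra Q)
    (hΘ : Θ ∈ Submodule.span ℝ
      {x : CliffordAlgebra Q | ∃ s : Finset (Fin m), s.card = r ∧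
        x = ((s.sort (· ≤ ·)).map fun i => ι Q (e i)).prod}) :
    ∑ i : Fin m, ι Q (e i) * Θ * ι Q (e i)
      = ((-1 : ℝ) ^ r * (2 * (r : ℝ) - (m : ℝ))) • Θ := by
  induction hΘ using Submodule.span_induction with
  | mem x hx =>
    obtain ⟨s, hcard, rfl⟩ := hx
    set l := s.sort (· ≤ ·) with hl
    have hlen : l.length = r := by rw [hl, Finset.length_sort, hcard]
    have hnd : l.Nodup := s.sort_nodup _
    set B := (l.map fun j => ι Q (e j)).prod with hB
    have key : ∀ i : Fin m, ι Q (e i) * B * ι Q (e i)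
        = (if i ∈ s then ((-1:ℝ)^r) else (-(-1:ℝ)^r)) • B := by
      intro i
      by_cases hi : i ∈ s
      · rw [if_pos hi, ← hlen]
        exact aux_mem e Q hQ l hnd i ((Finset.mem_sort _).mpr hi)
      · rw [if_neg hi]
        have hi' : i ∉ l := fun h => hi ((Finset.mem_sort _).mp h)
        rw [aux_comm e Q hQ l i hi', smul_mul_assoc, mul_assoc, aux_sq e Q hQ i,
          Algebra.algebraMap_eq_smul_one, mul_smul_comm, mul_one, smul_smul, hlen,
          mul_neg_one]
    rw [Finset.sum_congr rfl fun i _ => key i, ← Finset.sum_smul]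
    congr 1
    rw [Finset.sum_ite, Finset.sum_const, Finset.sum_const]
    have h1 : Finset.univ.filter (fun i => i ∈ s) = s := by ext i; simp
    have h2 : (Finset.univ.filter (fun i => ¬ i ∈ s)).card = m - r := by
      have hc : Finset.univ.filter (fun i => ¬ i ∈ s) = sᶜ := by ext i; simp
      rw [hc, Finset.card_compl, hcard, Fintype.card_fin]
    rw [h1, h2, hcard, nsmul_eq_mul, nsmul_eq_mul, Nat.cast_sub hr]
    ring
  | zero => simp
  | add x y _ _ hx hy =>
    simp only [mul_add, add_mul, Finset.sum_add_distrib, hx, hy, smul_add]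
  | smul a x _ hx =>
    simp only [Algebra.mul_smul_comm, Algebra.smul_mul_assoc, ← Finset.smul_sum, hx]
    rw [smul_comm]
end

section
/- Let N ≥ 2 be an integer and let Ψ : Fin 2 → Fin N → ℂ be a doubly-indexed family of complex numbers. Suppose that for every k with 1 ≤ k ≤ N − 1, writing a = Ψ 0 0, b = Ψ 0 k, c = Ψ 1 0, d = Ψ 1 k, the following nine real equations hold: (1) |b|² + |c|² − |a|² − |d|² = 0; (2) Re(−a·conj(d) − c·conj(b)) = 0; (3) Re(a·conj(d) − c·conj(b)) = 0; (4) Im(a·conj(d) + c·conj(b)) = 0; (5) Im(a·conj(d) − c·conj(b)) = 0; (6) Re(b·conj(d) − a·conj(c)) = 0; (7) Im(a·conj(c) − b·conj(d)) = 0; (8) Im(a·conj(b) − c·conj(d)) = 0; (9) Re(c·conj(d) − a·conj(b)) = 0. Then Ψ j k = 0 for all j and k. -/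
open ComplexConjugate

private lemma conj_eq_zero' {z : ℂ} (h : conj z = 0) : z = 0 := by
  simpa using congrArg conj h

private lemma abs_sq_zero (b c : ℂ) (h : ‖b‖ ^ 2 + ‖c‖ ^ 2 = 0) :
    b = 0 ∧ c = 0 := by
  have hb : ‖b‖ = 0 := by
    nlinarith [norm_nonneg b, norm_nonneg c, sq_nonneg (‖b‖),
      sq_nonneg (‖c‖)]
  have hc : ‖c‖ = 0 := by
    nlinarith [norm_nonneg b, norm_nonneg c, sq_nonneg (‖b‖),
      sq_nonneg (‖c‖)]
  exact ⟨by simpa using hb, by simpa using hc⟩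

private lemma key (a b c d : ℂ)
    (e1 : ‖b‖ ^ 2 + ‖c‖ ^ 2
        - ‖a‖ ^ 2 - ‖d‖ ^ 2 = 0)
    (had : a * conj d = 0) (hcb : c * conj b = 0)
    (hbd : b * conj d = a * conj c) (hab : a * conj b = c * conj d) :
    a = 0 ∧ b = 0 ∧ c = 0 ∧ d = 0 := by
  rcases mul_eq_zero.mp had with ha | hd
  · -- a = 0
    subst ha
    simp only [zero_mul, map_zero, mul_zero, ne_eq, OfNat.ofNat_ne_zero,
      not_false_eq_true, zero_pow, norm_zero] at e1 hbd hab
    have h0 : c * conj d = 0 := hab.symm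
    rcases mul_eq_zero.mp h0 with hc | hd
    · subst hc
      have h1 : b * conj d = 0 := hbd
      rcases mul_eq_zero.mp h1 with hb | hd
      · subst hb
        simp only [map_zero, ne_eq, OfNat.ofNat_ne_zero, not_false_eq_true,
          zero_pow, norm_zero] at e1
        have : ‖d‖ = 0 := by nlinarith [norm_nonneg d]
        exact ⟨rfl, rfl, rfl, by simpa using this⟩
      · have hd0 : d = 0 := conj_eq_zero' hd
        subst hd0
        simp only [map_zero, ne_eq, OfNat.ofNat_ne_zero, not_false_eq_true,
          zero_pow, norm_zero] at e1
        have : ‖b‖ = 0 := by nlinarith [norm_nonneg b]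
        exact ⟨rfl, by simpa using this, rfl, rfl⟩
    · have hd0 : d = 0 := conj_eq_zero' hd
      subst hd0
      simp only [map_zero, ne_eq, OfNat.ofNat_ne_zero, not_false_eq_true,
        zero_pow, norm_zero] at e1
      have := abs_sq_zero b c (by linarith)
      exact ⟨rfl, this.1, this.2, rfl⟩
  · have hd0 : d = 0 := conj_eq_zero' hd
    subst hd0
    simp only [map_zero, mul_zero, ne_eq, OfNat.ofNat_ne_zero,
      not_false_eq_true, zero_pow, norm_zero] at e1 hbd hab
    have h0 : a * conj c = 0 := hbd.symm
    rcases mul_eq_zero.mp h0 with ha | hc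
    · subst ha
      simp only [map_zero, ne_eq, OfNat.ofNat_ne_zero, not_false_eq_true,
        zero_pow, norm_zero] at e1
      have := abs_sq_zero b c (by linarith)
      exact ⟨rfl, this.1, this.2, rfl⟩
    · have hc0 : c = 0 := conj_eq_zero' hc
      subst hc0
      simp only [map_zero, ne_eq, OfNat.ofNat_ne_zero, not_false_eq_true,
        zero_pow, norm_zero] at e1 hab
      have h1 : a * conj b = 0 := hab
      rcases mul_eq_zero.mp h1 with ha | hb
      · subst ha
        simp only [map_zero, ne_eq, OfNat.ofNat_ne_zero, not_false_eq_true,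
          zero_pow, norm_zero] at e1
        have : ‖b‖ = 0 := by nlinarith [norm_nonneg b]
        exact ⟨rfl, by simpa using this, rfl, rfl⟩
      · have hb0 : b = 0 := conj_eq_zero' hb
        subst hb0
        simp only [map_zero, ne_eq, OfNat.ofNat_ne_zero, not_false_eq_true,
          zero_pow, norm_zero] at e1
        have : ‖a‖ = 0 := by nlinarith [norm_nonneg a]
        exact ⟨by simpa using this, rfl, rfl, rfl⟩

/-- If all the component equations of the vanishing Dirac current hold for each
`k ∈ {1, …, N-1}`, then all components of the spinor vanish. -/
theorem spinor_components_vanish (N : ℕ) (hN : 2 ≤ N) (Ψ : Fin 2 → Fin N → ℂ)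
    (h : ∀ k : Fin N, 1 ≤ (k : ℕ) →
      (let a := Ψ 0 ⟨0, by omega⟩
       let b := Ψ 0 k
       let c := Ψ 1 ⟨0, by omega⟩
       let d := Ψ 1 k
       ‖b‖ ^ 2 + ‖c‖ ^ 2
          - ‖a‖ ^ 2 - ‖d‖ ^ 2 = 0 ∧
       (-(a * conj d) - c * conj b).re = 0 ∧
       (a * conj d - c * conj b).re = 0 ∧
       (a * conj d + c * conj b).im = 0 ∧
       (a * conj d - c * conj b).im = 0 ∧
       (b * conj d - a * conj c).re = 0 ∧
       (a * conj c - b * conj d).im = 0 ∧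
       (a * conj b - c * conj d).im = 0 ∧
       (c * conj d - a * conj b).re = 0)) :
    ∀ (j : Fin 2) (k : Fin N), Ψ j k = 0 := by
  have main : ∀ k : Fin N, 1 ≤ (k : ℕ) →
      Ψ 0 ⟨0, by omega⟩ = 0 ∧ Ψ 0 k = 0 ∧ Ψ 1 ⟨0, by omega⟩ = 0 ∧ Ψ 1 k = 0 := by
    intro k hk
    obtain ⟨e1, e2, e3, e4, e5, e6, e7, e8, e9⟩ := h k hk
    set a := Ψ 0 ⟨0, by omega⟩
    set b := Ψ 0 k
    set c := Ψ 1 ⟨0, by omega⟩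
    set d := Ψ 1 k
    simp only [Complex.sub_re, Complex.neg_re, Complex.sub_im, Complex.add_im,
      Complex.neg_im] at e2 e3 e4 e5 e6 e7 e8 e9
    have had : a * conj d = 0 :=
      Complex.ext (by rw [Complex.zero_re]; linarith) (by rw [Complex.zero_im]; linarith)
    have hcb : c * conj b = 0 :=
      Complex.ext (by rw [Complex.zero_re]; linarith) (by rw [Complex.zero_im]; linarith)
    have hbd : b * conj d = a * conj c := Complex.ext (by linarith) (by linarith)
    have hab : a * conj b = c * conj d := Complex.ext (by linarith) (by linarith)
    exact key a b c d e1 had hcb hbd hab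
  intro j k
  by_cases hk : 1 ≤ (k : ℕ)
  · obtain ⟨h1, h2, h3, h4⟩ := main k hk
    fin_cases j <;> assumption
  · have hk0 : k = ⟨0, by omega⟩ := Fin.ext (by simp; omega)
    rw [hk0]
    obtain ⟨h1, h2, h3, h4⟩ := main ⟨1, by omega⟩ (by simp)
    fin_cases j <;> assumption
end

section
/- For every natural number j there exists a polynomial P with rational coefficients of degree exactly 2j + 1 such that for every natural number ℓ, P evaluated at ℓ equals ((−1)^j / (2j)!) · Σ_{s=0}^{ℓ} ((ℓ : ℤ) − 2s)^{2j} (the sum taken over s = 0, 1, …, ℓ, viewed as a rational number). -/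
open Polynomial Finset

/-- Faulhaber polynomial: evaluates at `n` to `∑_{s < n} s^p`. -/
private noncomputable def Qb (p : ℕ) : Polynomial ℚ :=
  ∑ i ∈ Finset.range (p + 1),
    Polynomial.C (_root_.bernoulli i * ((p + 1).choose i) / (p + 1)) * Polynomial.X ^ (p + 1 - i)

private lemma Qb_eval (p n : ℕ) : (Qb p).eval (n : ℚ) = ∑ s ∈ Finset.range n, (s : ℚ) ^ p := by
  rw [sum_range_pow]
  simp only [Qb, eval_finset_sum, eval_mul, eval_C, eval_pow, eval_X]
  refine Finset.sum_congr rfl fun i _ => ?_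
  ring

private lemma Qb_coeff (p : ℕ) : (Qb p).coeff (p + 1) = 1 / (p + 1) := by
  rw [Qb, finset_sum_coeff, Finset.sum_eq_single 0]
  · simp
  · intro i hi h0
    rw [coeff_C_mul, coeff_X_pow, if_neg (by simp at hi; omega), mul_zero]
  · simp

private lemma Qb_natDegree_le (p : ℕ) : (Qb p).natDegree ≤ p + 1 := by
  apply natDegree_sum_le_of_forall_le
  intro i hi
  exact (natDegree_C_mul_le _ _).trans ((natDegree_X_pow_le _).trans (by omega))

private lemma Qb_natDegree (p : ℕ) : (Qb p).natDegree = p + 1 :=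
  le_antisymm (Qb_natDegree_le p)
    (le_natDegree_of_ne_zero (by rw [Qb_coeff]; positivity))

private lemma comb_sum (j : ℕ) :
    ∑ k ∈ Finset.range (2 * j + 1), ((2 * j).choose k : ℚ) * (-2) ^ k / (k + 1)
      = 1 / (2 * j + 1) := by
  have h1 : ∀ k ∈ Finset.range (2 * j + 1),
      ((2 * j).choose k : ℚ) * (-2) ^ k / (k + 1)
        = (((2 * j + 1).choose (k + 1) : ℚ) * (-2) ^ (k + 1)) * (-1 / (2 * (2 * j + 1))) := by
    intro k _
    have h := Nat.add_one_mul_choose_eq (2 * j) k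
    have h' : ((2 * j : ℚ) + 1) * ((2 * j).choose k : ℚ)
        = ((2 * j + 1).choose (k + 1) : ℚ) * ((k : ℚ) + 1) := by exact_mod_cast h
    have hk : ((k : ℚ) + 1) ≠ 0 := by positivity
    have hj : ((2 * j : ℚ) + 1) ≠ 0 := by positivity
    field_simp
    linear_combination (2 * (-2) ^ k) * h'
  rw [Finset.sum_congr rfl h1, ← Finset.sum_mul]
  have h3 : ∑ i ∈ Finset.range (2 * j + 2), ((2 * j + 1).choose i : ℚ) * (-2) ^ i = -1 := by
    have hodd : (-1 : ℚ) ^ (2 * j + 1) = -1 := Odd.neg_one_pow ⟨j, by ring⟩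
    calc ∑ i ∈ Finset.range (2 * j + 2), ((2 * j + 1).choose i : ℚ) * (-2) ^ i
        = ∑ m ∈ Finset.range (2 * j + 1 + 1),
            (-2 : ℚ) ^ m * 1 ^ (2 * j + 1 - m) * ((2 * j + 1).choose m : ℚ) :=
          Finset.sum_congr rfl fun i _ => by ring
      _ = (-2 + 1) ^ (2 * j + 1) := (add_pow (-2 : ℚ) 1 (2 * j + 1)).symm
      _ = -1 := by rw [show (-2 : ℚ) + 1 = -1 by norm_num]; exact hodd
  have h4 := Finset.sum_range_succ' (fun i => ((2 * j + 1).choose i : ℚ) * (-2) ^ i) (2 * j + 1)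
  rw [h3] at h4
  simp only [Nat.choose_zero_right, Nat.cast_one, pow_zero, one_mul, mul_one] at h4
  have h5 : ∑ k ∈ Finset.range (2 * j + 1), ((2 * j + 1).choose (k + 1) : ℚ) * (-2) ^ (k + 1)
      = -2 := by linarith
  rw [h5]
  have hj : ((2 * j : ℚ) + 1) ≠ 0 := by positivity
  field_simp

private noncomputable def Pzero (j : ℕ) : Polynomial ℚ :=
  Polynomial.C ((-1 : ℚ) ^ j / (Nat.factorial (2 * j) : ℚ)) *
    ∑ k ∈ Finset.range (2 * j + 1),
      Polynomial.C (((2 * j).choose k : ℚ) * (-2) ^ k) *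
        ((Polynomial.X - 1) ^ (2 * j - k) * Qb k)

private lemma Xsub1_monic (m : ℕ) : ((Polynomial.X - 1 : Polynomial ℚ) ^ m).Monic := by
  have : (Polynomial.X - 1 : Polynomial ℚ) = Polynomial.X - Polynomial.C 1 := by
    rw [Polynomial.C_1]
  rw [this]
  exact (monic_X_sub_C 1).pow m

private lemma Pzero_coeff (j : ℕ) :
    (Pzero j).coeff (2 * j + 1)
      = ((-1 : ℚ) ^ j / (Nat.factorial (2 * j) : ℚ)) * (1 / (2 * j + 1)) := by
  rw [Pzero, coeff_C_mul, finset_sum_coeff]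
  congr 1
  have step : ∀ k ∈ Finset.range (2 * j + 1),
      (Polynomial.C (((2 * j).choose k : ℚ) * (-2) ^ k) *
        ((Polynomial.X - 1) ^ (2 * j - k) * Qb k)).coeff (2 * j + 1)
      = ((2 * j).choose k : ℚ) * (-2) ^ k / (k + 1) := by
    intro k hk
    have hk' : k ≤ 2 * j := by simp at hk; omega
    rw [coeff_C_mul]
    have hm := Xsub1_monic (2 * j - k)
    have hd1 : ((Polynomial.X - 1 : Polynomial ℚ) ^ (2 * j - k)).natDegree = 2 * j - k := by
      have : (Polynomial.X - 1 : Polynomial ℚ) = Polynomial.X - Polynomial.C 1 := by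
        rw [Polynomial.C_1]
      rw [this, natDegree_pow, natDegree_X_sub_C, mul_one]
    have hsplit : 2 * j + 1 = ((Polynomial.X - 1 : Polynomial ℚ) ^ (2 * j - k)).natDegree
        + (Qb k).natDegree := by rw [hd1, Qb_natDegree]; omega
    rw [hsplit, coeff_mul_degree_add_degree, hm.leadingCoeff, one_mul]
    rw [leadingCoeff, Qb_natDegree, Qb_coeff]
    ring
  rw [Finset.sum_congr rfl step]
  exact comb_sum j

private lemma Pzero_natDegree_le (j : ℕ) : (Pzero j).natDegree ≤ 2 * j + 1 := by
  apply (natDegree_C_mul_le _ _).trans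
  apply natDegree_sum_le_of_forall_le
  intro k hk
  have hk' : k ≤ 2 * j := by simp at hk; omega
  apply (natDegree_C_mul_le _ _).trans
  apply (natDegree_mul_le).trans
  have hd1 : ((Polynomial.X - 1 : Polynomial ℚ) ^ (2 * j - k)).natDegree = 2 * j - k := by
    have : (Polynomial.X - 1 : Polynomial ℚ) = Polynomial.X - Polynomial.C 1 := by
      rw [Polynomial.C_1]
    rw [this, natDegree_pow, natDegree_X_sub_C, mul_one]
  rw [hd1, Qb_natDegree]
  omega

private lemma Pzero_eval (j n : ℕ) :
    (Pzero j).eval (n : ℚ)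
      = ((-1 : ℚ) ^ j / (Nat.factorial (2 * j) : ℚ)) *
          ∑ s ∈ Finset.range n, ((n : ℚ) - 1 - 2 * s) ^ (2 * j) := by
  rw [Pzero]
  simp only [eval_mul, eval_C, eval_finset_sum, eval_pow, eval_sub, eval_X, eval_one]
  congr 1
  have step : ∀ s ∈ Finset.range n, ((n : ℚ) - 1 - 2 * s) ^ (2 * j)
      = ∑ k ∈ Finset.range (2 * j + 1),
          ((2 * j).choose k : ℚ) * (-2) ^ k * (((n : ℚ) - 1) ^ (2 * j - k) * (s : ℚ) ^ k) := by
    intro s _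
    have h := add_pow (-2 * (s : ℚ)) ((n : ℚ) - 1) (2 * j)
    have hx : ((n : ℚ) - 1 - 2 * s) = -2 * (s : ℚ) + ((n : ℚ) - 1) := by ring
    rw [hx, h]
    exact Finset.sum_congr rfl fun k _ => by rw [mul_pow]; ring
  rw [Finset.sum_congr rfl step, Finset.sum_comm]
  refine Finset.sum_congr rfl fun k _ => ?_
  rw [Qb_eval, Finset.mul_sum, Finset.mul_sum]

/-- The coefficient functions `p_j(ℓ) = ((-1)^j/(2j)!) ∑_{s=0}^ℓ (ℓ - 2s)^{2j}` are
rational polynomials in `ℓ` of degree exactly `2j + 1`. -/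
theorem pj_is_polynomial (j : ℕ) :
    ∃ P : Polynomial ℚ, P.degree = (2 * j + 1 : ℕ) ∧
      ∀ ℓ : ℕ, P.eval (ℓ : ℚ) =
        ((-1 : ℚ) ^ j / (Nat.factorial (2 * j) : ℚ)) *
          ∑ s ∈ Finset.range (ℓ + 1),
            ((((ℓ : ℤ) - 2 * (s : ℤ)) ^ (2 * j) : ℤ) : ℚ) := by
  refine ⟨(Pzero j).comp (Polynomial.X + 1), ?_, ?_⟩
  · have hc : (Pzero j).coeff (2 * j + 1) ≠ 0 := by
      rw [Pzero_coeff]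
      have h1 : ((-1 : ℚ) ^ j / (Nat.factorial (2 * j) : ℚ)) ≠ 0 := by
        apply div_ne_zero
        · exact pow_ne_zero _ (by norm_num)
        · exact_mod_cast Nat.factorial_ne_zero (2 * j)
      have h2 : (1 / (2 * (j : ℚ) + 1)) ≠ 0 := by positivity
      exact mul_ne_zero h1 h2
    have hP0 : Pzero j ≠ 0 := fun h => hc (by simp [h])
    have hdeg : (Pzero j).natDegree = 2 * j + 1 :=
      le_antisymm (Pzero_natDegree_le j) (le_natDegree_of_ne_zero hc)
    have hcomp : ((Pzero j).comp (Polynomial.X + 1)).natDegree = 2 * j + 1 := by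
      rw [natDegree_comp, hdeg]
      have hx : (Polynomial.X + 1 : Polynomial ℚ) = Polynomial.X + Polynomial.C 1 := by
        rw [Polynomial.C_1]
      rw [hx, natDegree_X_add_C, mul_one]
    have hne : (Pzero j).comp (Polynomial.X + 1) ≠ 0 := by
      intro h
      rw [h, natDegree_zero] at hcomp
      omega
    rw [degree_eq_natDegree hne, hcomp]
  · intro ℓ
    rw [eval_comp]
    simp only [eval_add, eval_X, eval_one]
    have : ((ℓ : ℚ) + 1) = ((ℓ + 1 : ℕ) : ℚ) := by push_cast; ring
    rw [this, Pzero_eval]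
    congr 1
    refine Finset.sum_congr rfl fun s _ => ?_
    push_cast
    ring
end
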